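/- arXiv:2512.01930 — 2 statements merged into one kernel-verified Lean document; each statement's English description precedes it below -/
import Mathlib

section
/- Bonnet's theorem (one-dimensional case): if ℓ : R → R is differentiable with ℓ and ℓ' having at most polynomial growth, and q = N(m, σ²) with σ > 0 fixed, then d/dm E_{θ∼q}[ℓ(θ)] = E_{θ∼q}[ℓ'(θ)]. -/
open Real MeasureTheory

/-! Substituting `θ = x + m` moves the mean out of the density and into the integrand, so the
claim is differentiation under the integral sign of `m' ↦ ∫ ℓ (x + m') φ(x) dx` for the centred
density `φ`. For `|m' - m| < 1` the derivative `ℓ' (x + m') φ(x)` is dominated by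
`C (2 + |m|)ⁿ (1 + |x|)ⁿ φ(x)`, which is integrable because the Gaussian has moments of all
orders. -/

/-- `f` has at most polynomial growth. -/
def PolyGrowth (f : ℝ → ℝ) : Prop :=
  ∃ C : ℝ, ∃ n : ℕ, ∀ x : ℝ, |f x| ≤ C * (1 + |x|) ^ n

/-- Gaussian density with mean `m` and standard deviation `σ`. -/
noncomputable def gaussPDF (m σ x : ℝ) : ℝ :=
  (1 / (σ * Real.sqrt (2 * Real.pi))) * Real.exp (-(x - m) ^ 2 / (2 * σ ^ 2))

lemma one_add_abs_add_le_mul (x a : ℝ) : 1 + |x + a| ≤ (1 + |x|) * (1 + |a|) := by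
  nlinarith [abs_add_le x a, abs_nonneg x, abs_nonneg a]

lemma PolyGrowth.norm_comp_add_mul_le {f : ℝ → ℝ} (hf : PolyGrowth f) (w : ℝ → ℝ) :
    ∃ C : ℝ, ∃ n : ℕ, 0 ≤ C ∧
      ∀ x a : ℝ, ‖f (x + a) * w x‖ ≤ C * (1 + |a|) ^ n * ‖(1 + |x|) ^ n * w x‖ := by
  obtain ⟨C, n, hC⟩ := hf
  have hC₀ : 0 ≤ C := (abs_nonneg _).trans (by simpa using hC 0)
  refine ⟨C, n, hC₀, fun x a => ?_⟩
  calc ‖f (x + a) * w x‖ = |f (x + a)| * |w x| := by simp only [norm_mul, Real.norm_eq_abs]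
    _ ≤ C * ((1 + |x|) * (1 + |a|)) ^ n * |w x| := by
        gcongr
        exact (hC _).trans (by gcongr; exact one_add_abs_add_le_mul x a)
    _ = C * (1 + |a|) ^ n * ‖(1 + |x|) ^ n * w x‖ := by
        rw [norm_mul, norm_pow, Real.norm_eq_abs, Real.norm_eq_abs,
          abs_of_nonneg (by positivity : (0 : ℝ) ≤ 1 + |x|), mul_pow]
        ring

lemma PolyGrowth.integrable_comp_add_mul {f w : ℝ → ℝ} (hf : PolyGrowth f)
    (hf_meas : Measurable f) (hw : ∀ n : ℕ, Integrable fun x => (1 + |x|) ^ n * w x) (a : ℝ) :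
    Integrable fun x => f (x + a) * w x := by
  obtain ⟨C, n, -, hC⟩ := hf.norm_comp_add_mul_le w
  have hw_meas : AEStronglyMeasurable w volume := by simpa using (hw 0).aestronglyMeasurable
  exact ((hw n).norm.const_mul _).mono'
    ((hf_meas.comp (measurable_add_const a)).aestronglyMeasurable.mul hw_meas)
    (Filter.Eventually.of_forall fun x => hC x a)

theorem hasDerivAt_integral_comp_add_mul {f w : ℝ → ℝ} (hf : Differentiable ℝ f)
    (hf_growth : PolyGrowth f) (hf'_growth : PolyGrowth (deriv f))
    (hw : ∀ n : ℕ, Integrable fun x => (1 + |x|) ^ n * w x) (m : ℝ) :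
    HasDerivAt (fun a => ∫ x, f (x + a) * w x) (∫ x, deriv f (x + m) * w x) m := by
  have hw_meas : AEStronglyMeasurable w volume := by simpa using (hw 0).aestronglyMeasurable
  obtain ⟨C, n, hC₀, hC⟩ := hf'_growth.norm_comp_add_mul_le w
  refine (hasDerivAt_integral_of_dominated_loc_of_deriv_le (Metric.ball_mem_nhds m one_pos)
    (F := fun a x => f (x + a) * w x) (F' := fun a x => deriv f (x + a) * w x)
    (bound := fun x => C * (2 + |m|) ^ n * ‖(1 + |x|) ^ n * w x‖)
    (Filter.Eventually.of_forall fun a =>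
      (hf.continuous.comp (continuous_add_const a)).aestronglyMeasurable.mul hw_meas)
    (hf_growth.integrable_comp_add_mul hf.continuous.measurable hw m)
    (((measurable_deriv f).comp (measurable_add_const m)).aestronglyMeasurable.mul hw_meas)
    ?_ ((hw n).norm.const_mul _) ?_).2
  · filter_upwards with x a ha
    have ha' : 1 + |a| ≤ 2 + |m| := by
      have := abs_sub_abs_le_abs_sub a m
      rw [Metric.mem_ball, Real.dist_eq] at ha
      linarith
    exact (hC x a).trans (by gcongr)
  · filter_upwards with x a _
    exact ((hf (x + a)).hasDerivAt.comp_const_add x a).mul_const (w x)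

lemma integrable_abs_pow_mul_exp_neg_mul_sq {b : ℝ} (hb : 0 < b) (k : ℕ) :
    Integrable fun x : ℝ => |x| ^ k * exp (-b * x ^ 2) := by
  have := (integrable_rpow_mul_exp_neg_mul_sq hb (s := k)
    (neg_one_lt_zero.trans_le k.cast_nonneg)).norm
  simpa [abs_mul, Real.rpow_natCast, abs_pow] using this

lemma integrable_one_add_abs_pow_mul_exp_neg_mul_sq {b : ℝ} (hb : 0 < b) (n : ℕ) :
    Integrable fun x : ℝ => (1 + |x|) ^ n * exp (-b * x ^ 2) := by
  simp_rw [add_comm (1 : ℝ), add_pow, one_pow, mul_one, Finset.sum_mul]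
  refine integrable_finsetSum _ fun k _ => ?_
  simpa [mul_comm, mul_assoc, mul_left_comm] using
    (integrable_abs_pow_mul_exp_neg_mul_sq hb k).const_mul (n.choose k : ℝ)

lemma gaussPDF_zero_eq (σ x : ℝ) :
    gaussPDF 0 σ x = 1 / (σ * √(2 * π)) * exp (-(1 / (2 * σ ^ 2)) * x ^ 2) := by
  unfold gaussPDF
  ring_nf

lemma integrable_one_add_abs_pow_mul_gaussPDF {σ : ℝ} (hσ : σ ≠ 0) (n : ℕ) :
    Integrable fun x : ℝ => (1 + |x|) ^ n * gaussPDF 0 σ x := by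
  have hb : 0 < 1 / (2 * σ ^ 2) := by have := sq_pos_of_ne_zero hσ; positivity
  simpa only [gaussPDF_zero_eq, mul_left_comm] using
    (integrable_one_add_abs_pow_mul_exp_neg_mul_sq hb n).const_mul (1 / (σ * √(2 * π)))

lemma integral_mul_gaussPDF (f : ℝ → ℝ) (m σ : ℝ) :
    ∫ θ, f θ * gaussPDF m σ θ = ∫ x, f (x + m) * gaussPDF 0 σ x := by
  rw [← integral_add_right_eq_self _ m]
  simp [gaussPDF]

/-- Bonnet's theorem (1D): if `ℓ` is differentiable with `ℓ, ℓ'` of at most polynomial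
growth and `q = N(m, σ²)` with `σ > 0`, then `d/dm E_{θ∼q}[ℓ(θ)] = E_{θ∼q}[ℓ'(θ)]`. -/
theorem stmt1 (ℓ : ℝ → ℝ) (hℓ : Differentiable ℝ ℓ)
    (hg : PolyGrowth ℓ) (hg' : PolyGrowth (deriv ℓ))
    (σ : ℝ) (hσ : 0 < σ) (m : ℝ) :
    HasDerivAt (fun m' : ℝ => ∫ θ : ℝ, ℓ θ * gaussPDF m' σ θ)
      (∫ θ : ℝ, deriv ℓ θ * gaussPDF m σ θ) m := by
  rw [funext (integral_mul_gaussPDF ℓ · σ), integral_mul_gaussPDF]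
  exact hasDerivAt_integral_comp_add_mul hℓ hg hg'
    (integrable_one_add_abs_pow_mul_gaussPDF hσ.ne') m
end

section
/- If i is sampled uniformly from {1,…,N} and the per-example gradients are L-Lipschitz, then the second moment of the SVRG estimator satisfies E_i‖∇ℓ_i(θ_in) − ∇ℓ_i(θ_out) + ḡ(θ_out) − ḡ(θ_in)‖² ≤ L² ‖θ_in − θ_out‖², where ḡ(θ) = (1/N) Σ_j ∇ℓ_j(θ). -/
open Finset

/-!
Writing `v i = ∇ℓ_i(θ_in) - ∇ℓ_i(θ_out)`, the SVRG estimator is `v i - v̄` with `v̄` the mean of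
the `v i`. Centering can only lower the second moment, since
`∑ ‖v i - v̄‖² = ∑ ‖v i‖² - N ‖v̄‖²`, and `‖v i‖ ≤ L ‖θ_in - θ_out‖` by the Lipschitz bound.
-/

section

variable {ι E : Type*} [NormedAddCommGroup E] [InnerProductSpace ℝ E]

theorem Finset.sum_eq_card_smul_average (s : Finset ι) (v : ι → E) :
    ∑ i ∈ s, v i = (#s : ℝ) • ((#s : ℝ)⁻¹ • ∑ i ∈ s, v i) := by
  rcases s.eq_empty_or_nonempty with rfl | hs
  · simp
  · rw [smul_smul, mul_inv_cancel₀ (by exact_mod_cast hs.card_ne_zero), one_smul]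

theorem Finset.sum_norm_sub_average_sq (s : Finset ι) (v : ι → E) :
    ∑ i ∈ s, ‖v i - (#s : ℝ)⁻¹ • ∑ j ∈ s, v j‖ ^ 2
      = ∑ i ∈ s, ‖v i‖ ^ 2 - #s * ‖(#s : ℝ)⁻¹ • ∑ j ∈ s, v j‖ ^ 2 := by
  set m := (#s : ℝ)⁻¹ • ∑ j ∈ s, v j
  have hsum : ∑ i ∈ s, v i = (#s : ℝ) • m := s.sum_eq_card_smul_average v
  simp only [norm_sub_sq_real]
  rw [sum_add_distrib, sum_sub_distrib, ← mul_sum, ← sum_inner, hsum, real_inner_smul_left,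
    real_inner_self_eq_norm_sq, sum_const, nsmul_eq_mul]
  ring

theorem Finset.sum_norm_sub_average_sq_le (s : Finset ι) (v : ι → E) :
    ∑ i ∈ s, ‖v i - (#s : ℝ)⁻¹ • ∑ j ∈ s, v j‖ ^ 2 ≤ ∑ i ∈ s, ‖v i‖ ^ 2 := by
  rw [s.sum_norm_sub_average_sq v, sub_le_self_iff]
  positivity

end

theorem Finset.inv_card_mul_sum_le {ι : Type*} (s : Finset ι) (f : ι → ℝ) {c : ℝ} (hc : 0 ≤ c)
    (hf : ∀ i ∈ s, f i ≤ c) : (#s : ℝ)⁻¹ * ∑ i ∈ s, f i ≤ c := by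
  calc (#s : ℝ)⁻¹ * ∑ i ∈ s, f i ≤ (#s : ℝ)⁻¹ * (#s * c) := by
        gcongr
        simpa using sum_le_card_nsmul s f c hf
    _ ≤ c := by
        rw [← mul_assoc]
        exact mul_le_of_le_one_left hc (inv_mul_le_one_of_le₀ le_rfl (Nat.cast_nonneg _))

theorem stmt8_general {d N : ℕ} (L : ℝ)
    (ℓ : Fin N → EuclideanSpace ℝ (Fin d) → ℝ)
    (hLip : ∀ i x y, ‖gradient (ℓ i) x - gradient (ℓ i) y‖ ≤ L * ‖x - y‖)
    (θin θout : EuclideanSpace ℝ (Fin d)) :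
    (N : ℝ)⁻¹ * ∑ i : Fin N,
        ‖gradient (ℓ i) θin - gradient (ℓ i) θout
          + (N : ℝ)⁻¹ • ∑ j : Fin N, gradient (ℓ j) θout
          - (N : ℝ)⁻¹ • ∑ j : Fin N, gradient (ℓ j) θin‖ ^ 2
      ≤ L ^ 2 * ‖θin - θout‖ ^ 2 := by
  set v := fun i => gradient (ℓ i) θin - gradient (ℓ i) θout
  have hcard : (#(univ : Finset (Fin N)) : ℝ) = N := by simp
  have hcentered : ∀ i, gradient (ℓ i) θin - gradient (ℓ i) θout
      + (N : ℝ)⁻¹ • ∑ j, gradient (ℓ j) θout - (N : ℝ)⁻¹ • ∑ j, gradient (ℓ j) θin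
      = v i - (N : ℝ)⁻¹ • ∑ j, v j := by
    intro i
    simp only [v, sum_sub_distrib, smul_sub]
    abel
  have hv : ∀ i ∈ univ, ‖v i‖ ^ 2 ≤ L ^ 2 * ‖θin - θout‖ ^ 2 := fun i _ => by
    rw [← mul_pow]
    exact pow_le_pow_left₀ (norm_nonneg _) (hLip i θin θout) 2
  have hcentering := univ.sum_norm_sub_average_sq_le v
  have haverage := univ.inv_card_mul_sum_le _ (by positivity) hv
  rw [hcard] at hcentering haverage
  simp only [hcentered]
  exact (mul_le_mul_of_nonneg_left hcentering (by positivity)).trans haverage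

/-- Second-moment bound for SVRG: if each `∇ℓ_i` is `L`-Lipschitz and `i` is uniform on
`{1,…,N}`, then `E_i‖∇ℓ_i(θ_in) - ∇ℓ_i(θ_out) + ḡ(θ_out) - ḡ(θ_in)‖² ≤ L²‖θ_in - θ_out‖²`,
where `ḡ(θ) = (1/N)∑_j ∇ℓ_j(θ)`. -/
theorem stmt8 {d N : ℕ} (hN : 0 < N) (L : ℝ) (hL : 0 ≤ L)
    (ℓ : Fin N → EuclideanSpace ℝ (Fin d) → ℝ)
    (hdiff : ∀ i, Differentiable ℝ (ℓ i))
    (hLip : ∀ i x y, ‖gradient (ℓ i) x - gradient (ℓ i) y‖ ≤ L * ‖x - y‖)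
    (θin θout : EuclideanSpace ℝ (Fin d)) :
    (N : ℝ)⁻¹ * ∑ i : Fin N,
        ‖gradient (ℓ i) θin - gradient (ℓ i) θout
          + (N : ℝ)⁻¹ • ∑ j : Fin N, gradient (ℓ j) θout
          - (N : ℝ)⁻¹ • ∑ j : Fin N, gradient (ℓ j) θin‖ ^ 2
      ≤ L ^ 2 * ‖θin - θout‖ ^ 2 :=
  stmt8_general L ℓ hLip θin θout
end
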